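/- Let f ∈ G(Z). Then for every α > 0 and every u* ∈ X* there exist (x*, x**) ∈ X* × X** with f*(x*, x**) = ⟨x*, x**⟩ and v* ∈ X* with ‖v*‖² = ‖x**‖² = ⟨v*, x**⟩ such that u* = x* + α v*. Equivalently, Im( (M_{f*})⁻¹ + α (F_{X*})⁻¹ ) = X* for every α > 0. -/

import Mathlib

/-!
With `penalty α u (x, x*) = α‖x‖²/2 - ⟨x, u⟩ + ‖x* - u‖²/(2α)`, Young's inequality gives
`c + penalty α u ≥ 0`, so the continuous concave function `-penalty α u` lies below `c ≤ f`.
Hahn–Banach separation of the epigraph of `f` from the open strict hypograph of `-penalty α u`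
puts a continuous affine function `(x, x*) ↦ ⟨x, x*₀⟩ + ⟨x*, x**₀⟩ + r` between them. Lying below
`f` it gives `c(x*₀, x**₀) ≤ f*(x*₀, x**₀) ≤ -r`; lying above `-penalty α u` it gives
`‖u - x*₀‖²/(2α) + α‖x**₀‖²/2 - ⟨u, x**₀⟩ ≤ r`, the left side being the conjugate of the penalty.
For `v* = (u - x*₀)/α` the two bounds combine to `‖v*‖² + ‖x**₀‖² ≤ 2⟨v*, x**₀⟩`, which forces
`x**₀ ∈ F_{X*}(v*)` and equality throughout.
-/

open NormedSpace

noncomputable section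

/-- The coupling `c(x, x*) := ⟨x, x*⟩` on `Z := X × X*`. -/
def coup (X : Type*) [NormedAddCommGroup X] [NormedSpace ℝ X]
    (z : X × StrongDual ℝ X) : ℝ := z.2 z.1

/-- The coupling `c(u*, u**) := ⟨u*, u**⟩` on `Z* := X* × X**`. -/
def coupS (X : Type*) [NormedAddCommGroup X] [NormedSpace ℝ X]
    (p : StrongDual ℝ X × StrongDual ℝ (StrongDual ℝ X)) : ℝ := p.2 p.1

/-- The Fenchel conjugate `f* : X* × X** → ℝ ∪ {±∞}` of `f : Z → ℝ ∪ {+∞}`. -/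
def conjF (X : Type*) [NormedAddCommGroup X] [NormedSpace ℝ X]
    (f : X × StrongDual ℝ X → EReal) (p : StrongDual ℝ X × StrongDual ℝ (StrongDual ℝ X)) : EReal :=
  ⨆ z : X × StrongDual ℝ X, (((p.1 z.1 + p.2 z.2 : ℝ) : EReal) - f z)

open Set

theorem exists_affine_between_of_concaveOn_le {E : Type*} [TopologicalSpace E] [AddCommGroup E]
    [Module ℝ E] [IsTopologicalAddGroup E] [ContinuousSMul ℝ E] {f : E → EReal} {h : E → ℝ}
    (hf : Convex ℝ {p : E × ℝ | f p.1 ≤ p.2}) (hf_ne_top : ∃ z, f z ≠ ⊤)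
    (hh : ConcaveOn ℝ univ h) (hh_cont : Continuous h) (hle : ∀ z, (h z : EReal) ≤ f z) :
    ∃ (φ : StrongDual ℝ E) (c : ℝ), ∀ z, h z ≤ φ z + c ∧ ((φ z + c : ℝ) : EReal) ≤ f z := by
  have hB_conv : Convex ℝ {p : E × ℝ | p.2 < h p.1} := by
    simpa using hh.convex_strict_hypograph
  have hB_open : IsOpen {p : E × ℝ | p.2 < h p.1} :=
    isOpen_lt continuous_snd (hh_cont.comp continuous_fst)
  have hdisj : Disjoint {p : E × ℝ | p.2 < h p.1} {p : E × ℝ | f p.1 ≤ p.2} :=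
    disjoint_left.2 fun p hpB hpA =>
      (EReal.coe_lt_coe_iff.2 hpB).not_ge ((hle p.1).trans hpA)
  obtain ⟨Φ, γ, hΦB, hΦA⟩ := geometric_hahn_banach_open hB_conv hB_open hf hdisj
  set ψ := Φ.comp (ContinuousLinearMap.inl ℝ E ℝ)
  set σ := Φ (0, 1)
  have hΦ (z : E) (r : ℝ) : Φ (z, r) = ψ z + r * σ := by
    rw [← Φ.comp_inl_add_comp_inr, ← smul_eq_mul, ← map_smul]
    simp [ψ]
  -- `(z₀, h z₀ - 1)` lies in the hypograph, directly below `(z₀, (f z₀).toReal)` in the epigraph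
  have hσ : 0 < σ := by
    obtain ⟨z₀, hz₀⟩ := hf_ne_top
    have hA : γ ≤ Φ (z₀, (f z₀).toReal) := hΦA _ (EReal.le_coe_toReal hz₀)
    have hB : Φ (z₀, h z₀ - 1) < γ := hΦB _ (by simp)
    have : h z₀ ≤ (f z₀).toReal :=
      EReal.coe_le_coe_iff.1 ((hle z₀).trans (EReal.le_coe_toReal hz₀))
    rw [hΦ] at hA hB
    nlinarith
  have haff (z : E) : (-σ⁻¹ • ψ) z + γ / σ = (γ - ψ z) / σ := by
    simp only [FunLike.coe_smul, Pi.smul_apply, smul_eq_mul]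
    ring
  refine ⟨-σ⁻¹ • ψ, γ / σ, fun z => ⟨?_, ?_⟩⟩
  · refine le_of_forall_lt fun s hs => ?_
    have := hΦB (z, s) hs
    rw [hΦ] at this
    rw [haff, lt_div_iff₀ hσ]
    linarith
  · by_contra! hlt
    obtain ⟨t, hft, hta⟩ := EReal.lt_iff_exists_real_btwn.1 hlt
    have := hΦA (z, t) hft.le
    rw [hΦ] at this
    rw [haff, EReal.coe_lt_coe_iff, lt_div_iff₀ hσ] at hta
    linarith

theorem sq_norm_div_le_of_forall_apply_sub_le {E : Type*} [SeminormedAddCommGroup E]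
    [NormedSpace ℝ E] (T : StrongDual ℝ E) {β K : ℝ} (hβ : 0 < β)
    (hK : ∀ x, T x - β / 2 * ‖x‖ ^ 2 ≤ K) : ‖T‖ ^ 2 / (2 * β) ≤ K := by
  have hK₀ : 0 ≤ K := by simpa using hK 0
  have hT : ‖T‖ ≤ √(2 * β * K) := by
    refine T.opNorm_le_bound' (Real.sqrt_nonneg _) fun x hx => ?_
    have hx₀ : 0 < ‖x‖ := (norm_nonneg x).lt_of_ne' hx
    -- test `hK` at the maximiser of `s ↦ s * T x - β / 2 * s ^ 2 * ‖x‖ ^ 2`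
    have key := hK ((T x / (β * ‖x‖ ^ 2)) • x)
    rw [map_smul, smul_eq_mul, norm_smul, Real.norm_eq_abs, mul_pow, sq_abs] at key
    have hsq : (T x) ^ 2 ≤ 2 * β * K * ‖x‖ ^ 2 := by
      field_simp at key
      nlinarith
    rw [← Real.sqrt_sq hx₀.le, ← Real.sqrt_mul (by positivity), Real.norm_eq_abs]
    exact Real.abs_le_sqrt hsq
  rw [div_le_iff₀ (by positivity)]
  nlinarith [Real.sq_sqrt (by positivity : 0 ≤ 2 * β * K), norm_nonneg T]

theorem sq_norm_eq_of_add_le_two_mul_apply {E : Type*} [SeminormedAddCommGroup E]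
    [NormedSpace ℝ E] (v : E) (Φ : StrongDual ℝ E) (h : ‖v‖ ^ 2 + ‖Φ‖ ^ 2 ≤ 2 * Φ v) :
    ‖v‖ ^ 2 = ‖Φ‖ ^ 2 ∧ ‖v‖ ^ 2 = Φ v := by
  have hΦv : Φ v ≤ ‖Φ‖ * ‖v‖ := (le_abs_self _).trans (Φ.le_opNorm v)
  have hnorm : ‖v‖ = ‖Φ‖ := by nlinarith [sq_nonneg (‖v‖ - ‖Φ‖)]
  rw [hnorm] at hΦv h ⊢
  exact ⟨rfl, by nlinarith⟩

theorem convexOn_univ_sq_norm_sub {E : Type*} [SeminormedAddCommGroup E] [NormedSpace ℝ E]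
    (c : E) : ConvexOn ℝ univ fun x => ‖x - c‖ ^ 2 := by
  have := (convexOn_univ_norm.pow (fun _ _ => norm_nonneg _) 2).translate_right (-c)
  simpa [Function.comp_def, neg_add_eq_sub] using this

section

variable {X : Type*} [NormedAddCommGroup X] [NormedSpace ℝ X]

theorem conjF_le_of_affine_le (f : X × StrongDual ℝ X → EReal)
    (p : StrongDual ℝ X × StrongDual ℝ (StrongDual ℝ X)) (c : ℝ)
    (h : ∀ z, ((p.1 z.1 + p.2 z.2 + c : ℝ) : EReal) ≤ f z) :
    conjF X f p ≤ ((-c : ℝ) : EReal) :=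
  iSup_le fun z => (EReal.sub_le_sub le_rfl (h z)).trans_eq <| by
    rw [← EReal.coe_sub]
    ring_nf

def penalty (α : ℝ) (u : StrongDual ℝ X) (z : X × StrongDual ℝ X) : ℝ :=
  α / 2 * ‖z.1‖ ^ 2 - u z.1 + ‖z.2 - u‖ ^ 2 / (2 * α)

theorem continuous_penalty (α : ℝ) (u : StrongDual ℝ X) : Continuous (penalty α u) := by
  unfold penalty
  fun_prop

theorem convexOn_penalty {α : ℝ} (hα : 0 ≤ α) (u : StrongDual ℝ X) :
    ConvexOn ℝ univ (penalty α u) := by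
  have h₁ : ConvexOn ℝ univ fun z : X × StrongDual ℝ X => α / 2 * ‖z.1‖ ^ 2 := by
    have := (convexOn_univ_sq_norm_sub (0 : X)).comp_linearMap (LinearMap.fst ℝ X (StrongDual ℝ X))
    simpa [Function.comp_def] using this.smul (c := α / 2) (by positivity)
  have h₂ : ConcaveOn ℝ univ fun z : X × StrongDual ℝ X => u z.1 :=
    (u.toLinearMap.comp (LinearMap.fst ℝ X (StrongDual ℝ X))).concaveOn convex_univ
  have h₃ : ConvexOn ℝ univ fun z : X × StrongDual ℝ X => ‖z.2 - u‖ ^ 2 / (2 * α) := by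
    have := (convexOn_univ_sq_norm_sub u).comp_linearMap (LinearMap.snd ℝ X (StrongDual ℝ X))
    simpa [Function.comp_def, div_eq_inv_mul] using this.smul (c := (2 * α)⁻¹) (by positivity)
  exact (h₁.sub h₂).add h₃

theorem neg_penalty_le_coup {α : ℝ} (hα : 0 < α) (u : StrongDual ℝ X) (z : X × StrongDual ℝ X) :
    -penalty α u z ≤ coup X z := by
  have hop : u z.1 - z.2 z.1 ≤ ‖z.2 - u‖ * ‖z.1‖ := by
    simpa using (neg_le_abs _).trans ((z.2 - u).le_opNorm z.1)
  have hyoung : ‖z.2 - u‖ * ‖z.1‖ ≤ α / 2 * ‖z.1‖ ^ 2 + ‖z.2 - u‖ ^ 2 / (2 * α) := by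
    rw [← sub_nonneg]
    have : α / 2 * ‖z.1‖ ^ 2 + ‖z.2 - u‖ ^ 2 / (2 * α) - ‖z.2 - u‖ * ‖z.1‖
        = (α * ‖z.1‖ - ‖z.2 - u‖) ^ 2 / (2 * α) := by
      field_simp
      ring
    rw [this]
    positivity
  unfold penalty coup
  linarith

theorem sq_norm_div_add_le_of_neg_penalty_le {α : ℝ} (hα : 0 < α) (u xs : StrongDual ℝ X)
    (xss : StrongDual ℝ (StrongDual ℝ X)) (r : ℝ)
    (h : ∀ z, -penalty α u z ≤ xs z.1 + xss z.2 + r) :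
    ‖u - xs‖ ^ 2 / (2 * α) + α / 2 * ‖xss‖ ^ 2 ≤ r + xss u := by
  have hsep (x : X) (w : StrongDual ℝ X) :
      (u - xs) x - α / 2 * ‖x‖ ^ 2 + ((-xss) w - α⁻¹ / 2 * ‖w‖ ^ 2) ≤ r + xss u := by
    have := h (x, u + w)
    simp only [penalty, add_sub_cancel_left, map_add] at this
    simp only [sub_apply, neg_apply]
    field_simp at this ⊢
    linarith
  have hxss : α / 2 * ‖xss‖ ^ 2 = ‖-xss‖ ^ 2 / (2 * α⁻¹) := by
    rw [ContinuousLinearMap.opNorm_neg]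
    field_simp
  rw [hxss]
  refine le_sub_iff_add_le'.1 (sq_norm_div_le_of_forall_apply_sub_le _ (inv_pos.2 hα) fun w => ?_)
  refine le_sub_iff_add_le'.2 (le_sub_iff_add_le.1 ?_)
  exact sq_norm_div_le_of_forall_apply_sub_le _ hα fun x => le_sub_iff_add_le.2 (hsep x w)

end

theorem stmt3_general {X : Type*} [NormedAddCommGroup X] [NormedSpace ℝ X]
    (f : X × StrongDual ℝ X → EReal)
    (hproper : ∃ z, f z ≠ ⊤)
    (hconv : Convex ℝ {p : (X × StrongDual ℝ X) × ℝ | f p.1 ≤ (p.2 : EReal)})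
    (hge : ∀ z, ((coup X z : ℝ) : EReal) ≤ f z)
    (hgeS : ∀ p, ((coupS X p : ℝ) : EReal) ≤ conjF X f p)
    (α : ℝ) (hα : 0 < α) (u : StrongDual ℝ X) :
    ∃ (xs : StrongDual ℝ X) (xss : StrongDual ℝ (StrongDual ℝ X)) (vs : StrongDual ℝ X),
      conjF X f (xs, xss) = ((coupS X (xs, xss) : ℝ) : EReal) ∧
      ‖vs‖ ^ 2 = ‖xss‖ ^ 2 ∧ ‖vs‖ ^ 2 = xss vs ∧
      u = xs + α • vs := by
  obtain ⟨φ, r, hφ⟩ := exists_affine_between_of_concaveOn_le hconv hproper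
    (convexOn_penalty hα.le u).neg (continuous_penalty α u).neg
    fun z => (EReal.coe_le_coe (neg_penalty_le_coup hα u z)).trans (hge z)
  set xs := φ.comp (ContinuousLinearMap.inl ℝ X (StrongDual ℝ X))
  set xss := φ.comp (ContinuousLinearMap.inr ℝ X (StrongDual ℝ X))
  have hφ_apply (z : X × StrongDual ℝ X) : φ z = xs z.1 + xss z.2 :=
    (φ.comp_inl_add_comp_inr z).symm
  have hconj : conjF X f (xs, xss) ≤ ((-r : ℝ) : EReal) :=
    conjF_le_of_affine_le f _ r fun z => by simpa [hφ_apply] using (hφ z).2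
  have hcoup : xss xs ≤ -r := EReal.coe_le_coe_iff.1 ((hgeS _).trans hconj)
  have hconjG := sq_norm_div_add_le_of_neg_penalty_le hα u xs xss r fun z => by
    simpa [hφ_apply, add_assoc] using (hφ z).1
  set vs := α⁻¹ • (u - xs)
  have hu : u = xs + α • vs := by simp [vs, smul_smul, hα.ne']
  have hQ : α / 2 * (‖vs‖ ^ 2 + ‖xss‖ ^ 2) ≤ r + xss u := by
    rw [show u - xs = α • vs by rw [hu, add_sub_cancel_left], norm_smul,
      Real.norm_of_nonneg hα.le] at hconjG
    convert hconjG using 1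
    field_simp
  have hxss_u : xss u = xss xs + α * xss vs := by rw [hu, map_add, map_smul, smul_eq_mul]
  obtain ⟨hnorm, happly⟩ := sq_norm_eq_of_add_le_two_mul_apply vs xss <|
    le_of_mul_le_mul_left (a := α / 2) (by linarith) (by positivity)
  have hc : r = -xss xs := by
    rw [← hnorm, happly, hxss_u] at hQ
    linarith
  refine ⟨xs, xss, vs, le_antisymm ?_ (hgeS _), hnorm, happly, hu⟩
  simpa [hc, coupS] using hconj

/-- for `f ∈ G(Z)`, every `α > 0` and every `u* ∈ X*` there are
`(x*, x**) ∈ M_{f*}` and `v* ∈ F_{X*}⁻¹(x**)` with `u* = x* + α v*`; that is,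
`Im((M_{f*})⁻¹ + α (F_{X*})⁻¹) = X*`. -/
theorem stmt3 {X : Type*} [NormedAddCommGroup X] [NormedSpace ℝ X] [CompleteSpace X]
    (f : X × StrongDual ℝ X → EReal)
    (hne_bot : ∀ z, f z ≠ ⊥) (hproper : ∃ z, f z ≠ ⊤)
    (hconv : Convex ℝ {p : (X × StrongDual ℝ X) × ℝ | f p.1 ≤ (p.2 : EReal)})
    (hge : ∀ z, ((coup X z : ℝ) : EReal) ≤ f z)
    (hgeS : ∀ p, ((coupS X p : ℝ) : EReal) ≤ conjF X f p)
    (α : ℝ) (hα : 0 < α) (u : StrongDual ℝ X) :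
    ∃ (xs : StrongDual ℝ X) (xss : StrongDual ℝ (StrongDual ℝ X)) (vs : StrongDual ℝ X),
      conjF X f (xs, xss) = ((coupS X (xs, xss) : ℝ) : EReal) ∧
      ‖vs‖ ^ 2 = ‖xss‖ ^ 2 ∧ ‖vs‖ ^ 2 = xss vs ∧
      u = xs + α • vs :=
  stmt3_general f hproper hconv hge hgeS α hα u
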